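/- arXiv:2309.14252 — 2 statements merged into one kernel-verified Lean document; each statement's English description precedes it below -/
import Mathlib

section
/- Let 1 < p < ∞ and let (X_n) be a sequence of nontrivial normed linear spaces. Then 𝒟(⊕_p X_n) = sup_n 𝒟(X_n), where 𝒟(Y) = sup{diam(J(y)) : y ∈ Y, y ≠ 0}. -/
/-!
Write `J(x)` for the norm-one support functionals of `x`, `f_i = f ∘ single i` for the restriction
of a functional on `ℓ_p(E)` to the `i`-th summand, and `q` for the conjugate exponent of `p`.

Testing `f` against finitely supported vectors shows `∑ ‖f_i‖ ^ q ≤ ‖f‖ ^ q`. If `‖y‖ = 1` and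
`f ∈ J(y)`, then `1 = ∑ f_i (y_i) ≤ ∑ ‖f_i‖ ‖y_i‖ ≤ ∑ (‖y_i‖ ^ p / p + ‖f_i‖ ^ q / q) ≤ 1`, so the
equality case of Young's inequality gives `‖f_i‖ = ‖y_i‖ ^ (p - 1)` and `f_i (y_i) = ‖f_i‖ ‖y_i‖`:
each `f_i` is `‖y_i‖ ^ (p - 1)` times an element of `J(y_i)`. For `f, g ∈ J(y)` this bounds
`‖f_i - g_i‖` by `𝒟(E_i) ‖y_i‖ ^ (p - 1)`, and Hölder's inequality turns these bounds into
`‖f - g‖ ≤ sup_i 𝒟(E_i)`. Conversely, each `E_i` sits in `ℓ_p(E)` isometrically with a norm-one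
projection, and support functionals pull back along the projection, so `𝒟(E_i) ≤ 𝒟(ℓ_p(E))`.
-/

open scoped ENNReal

/-- The quantity 𝒟(X): the supremum over nonzero x of the diameter of the set of
norm-one support functionals of x. -/
noncomputable def scrD (X : Type*) [NormedAddCommGroup X] [NormedSpace ℝ X] : ℝ :=
  sSup ((fun x : X => Metric.diam {f : X →L[ℝ] ℝ | ‖f‖ = 1 ∧ f x = ‖x‖}) '' {x | x ≠ 0})

section SupportFunctionals

variable {X : Type*} [NormedAddCommGroup X] [NormedSpace ℝ X]

def supportFunctionals (x : X) : Set (X →L[ℝ] ℝ) := {f | ‖f‖ = 1 ∧ f x = ‖x‖}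

lemma isBounded_supportFunctionals (x : X) : Bornology.IsBounded (supportFunctionals x) :=
  (Metric.isBounded_iff_subset_closedBall 0).2 ⟨1, fun f hf => by simp [hf.1]⟩

lemma diam_supportFunctionals_le_two (x : X) : Metric.diam (supportFunctionals x) ≤ 2 :=
  Metric.diam_le_of_forall_dist_le zero_le_two fun f hf g hg =>
    (dist_le_norm_add_norm f g).trans (by rw [hf.1, hg.1]; norm_num)

lemma diam_supportFunctionals_le_scrD {x : X} (hx : x ≠ 0) :
    Metric.diam (supportFunctionals x) ≤ scrD X :=
  le_csSup ⟨2, by rintro _ ⟨y, -, rfl⟩; exact diam_supportFunctionals_le_two y⟩ ⟨x, hx, rfl⟩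

lemma scrD_le_of_forall {c : ℝ} (hc : 0 ≤ c)
    (h : ∀ x : X, x ≠ 0 → Metric.diam (supportFunctionals x) ≤ c) : scrD X ≤ c :=
  Real.sSup_le (by rintro _ ⟨x, hx, rfl⟩; exact h x hx) hc

lemma scrD_nonneg : 0 ≤ scrD X :=
  Real.sSup_nonneg (by rintro _ ⟨x, -, rfl⟩; exact Metric.diam_nonneg)

lemma scrD_le_two : scrD X ≤ 2 :=
  scrD_le_of_forall zero_le_two fun x _ => diam_supportFunctionals_le_two x

lemma supportFunctionals_smul {c : ℝ} (hc : 0 < c) (x : X) :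
    supportFunctionals (c • x) = supportFunctionals x := by
  ext f
  simp only [supportFunctionals, Set.mem_ofPred_eq, map_smul, smul_eq_mul, norm_smul,
    Real.norm_of_nonneg hc.le, mul_right_inj' hc.ne']

lemma inv_smul_mem_supportFunctionals {f : X →L[ℝ] ℝ} {x : X} {c : ℝ} (hc : 0 < c)
    (hf : ‖f‖ = c) (hfx : f x = c * ‖x‖) : c⁻¹ • f ∈ supportFunctionals x := by
  refine ⟨?_, ?_⟩
  · rw [norm_smul, norm_inv, Real.norm_of_nonneg hc.le, hf, inv_mul_cancel₀ hc.ne']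
  · rw [smul_apply, hfx, smul_eq_mul, inv_mul_cancel_left₀ hc.ne']

/-- `h ↦ h ∘ P` embeds `J(x)` isometrically into `J(T x)`. -/
lemma scrD_le_of_leftInverse {Y : Type*} [NormedAddCommGroup Y] [NormedSpace ℝ Y]
    (T : X → Y) (P : Y →L[ℝ] X) (hT : ∀ x, ‖T x‖ = ‖x‖) (hP : ‖P‖ ≤ 1)
    (hPT : Function.LeftInverse P T) : scrD X ≤ scrD Y := by
  have hnorm (h : X →L[ℝ] ℝ) : ‖h ∘L P‖ = ‖h‖ :=
    le_antisymm ((h.opNorm_comp_le P).trans (mul_le_of_le_one_right (norm_nonneg h) hP))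
      (h.opNorm_le_bound (norm_nonneg _) fun x => by
        simpa [hPT x, hT x] using (h ∘L P).le_opNorm (T x))
  have hiso : Isometry fun h : X →L[ℝ] ℝ => h ∘L P := Isometry.of_dist_eq fun h h' => by
    rw [dist_eq_norm, dist_eq_norm, ← ContinuousLinearMap.sub_comp, hnorm]
  refine scrD_le_of_forall scrD_nonneg fun x hx => ?_
  have hTx : T x ≠ 0 := norm_ne_zero_iff.1 (by rw [hT]; exact norm_ne_zero_iff.2 hx)
  calc Metric.diam (supportFunctionals x)
      = Metric.diam ((fun h : X →L[ℝ] ℝ => h ∘L P) '' supportFunctionals x) :=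
        (hiso.diam_image _).symm
    _ ≤ Metric.diam (supportFunctionals (T x)) := by
        refine Metric.diam_mono ?_ (isBounded_supportFunctionals _)
        rintro _ ⟨h, hh, rfl⟩
        exact ⟨by rw [hnorm, hh.1], by simp [hPT x, hT x, hh.2]⟩
    _ ≤ scrD Y := diam_supportFunctionals_le_scrD hTx

end SupportFunctionals

lemma ContinuousLinearMap.exists_norm_le_one_mul_norm_le_apply {X : Type*}
    [NormedAddCommGroup X] [NormedSpace ℝ X] (g : X →L[ℝ] ℝ) {t : ℝ} (ht : t < 1) :
    ∃ u : X, ‖u‖ ≤ 1 ∧ t * ‖g‖ ≤ g u := by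
  rcases (norm_nonneg g).eq_or_lt with hg | hg
  · exact ⟨0, by simp, by simp [← hg]⟩
  obtain ⟨x, hx, hgx⟩ := g.exists_lt_apply_of_lt_opNorm (mul_lt_of_lt_one_left hg ht)
  rcases lt_abs.1 (Real.norm_eq_abs (g x) ▸ hgx) with h | h
  · exact ⟨x, hx.le, h.le⟩
  · exact ⟨-x, by rw [norm_neg]; exact hx.le, by rw [map_neg]; exact h.le⟩

lemma Real.le_of_forall_lt_one_mul_le {a b : ℝ} (h : ∀ t < 1, t * a ≤ b) : a ≤ b := by
  have hlim : Filter.Tendsto (fun t : ℝ => t * a) (nhdsWithin 1 (Set.Iio 1)) (nhds a) :=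
    ((continuous_id.mul continuous_const).tendsto' 1 a (one_mul a)).mono_left nhdsWithin_le_nhds
  exact le_of_tendsto hlim (eventually_nhdsWithin_of_forall h)

namespace lp

variable {ι : Type*} [DecidableEq ι] {E : ι → Type*} [∀ i, NormedAddCommGroup (E i)]
  [∀ i, NormedSpace ℝ (E i)] {p : ℝ≥0∞} [Fact (1 ≤ p)]

lemma scrD_le_scrD (i : ι) : scrD (E i) ≤ scrD (lp E p) :=
  scrD_le_of_leftInverse (lp.single p i) (lp.evalCLM ℝ E p i)
    (lp.norm_single (zero_lt_one.trans_le Fact.out) i)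
    (LinearMap.mkContinuous_norm_le _ zero_le_one _) (lp.single_apply_self p i)

lemma sum_mul_norm_comp_single_le (hp : 0 < p.toReal) (f : lp E p →L[ℝ] ℝ) (s : Finset ι)
    {c : ι → ℝ} (hc : ∀ i, 0 ≤ c i) :
    ∑ i ∈ s, c i * ‖f ∘L lp.singleContinuousLinearMap ℝ E p i‖ ≤
      ‖f‖ * (∑ i ∈ s, c i ^ p.toReal) ^ p.toReal⁻¹ := by
  refine Real.le_of_forall_lt_one_mul_le fun t ht => ?_
  choose u hu1 hu using fun i =>
    (f ∘L lp.singleContinuousLinearMap ℝ E p i).exists_norm_le_one_mul_norm_le_apply ht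
  set z : lp E p := ∑ i ∈ s, lp.single p i (c i • u i)
  have hz : ‖z‖ ≤ (∑ i ∈ s, c i ^ p.toReal) ^ p.toReal⁻¹ := by
    rw [← Real.rpow_rpow_inv (norm_nonneg z) hp.ne', lp.norm_sum_single hp]
    gcongr with i
    rw [norm_smul, Real.norm_of_nonneg (hc i)]
    exact mul_le_of_le_one_right (hc i) (hu1 i)
  calc t * ∑ i ∈ s, c i * ‖f ∘L lp.singleContinuousLinearMap ℝ E p i‖
      = ∑ i ∈ s, c i * (t * ‖f ∘L lp.singleContinuousLinearMap ℝ E p i‖) := by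
        simp only [Finset.mul_sum, mul_left_comm]
    _ ≤ ∑ i ∈ s, c i * f (lp.single p i (u i)) := by
        gcongr with i
        · exact hc i
        · exact hu i
    _ = f z := by simp [z, map_sum, lp.single_smul]
    _ ≤ ‖f‖ * ‖z‖ := (Real.le_norm_self _).trans (f.le_opNorm z)
    _ ≤ _ := by gcongr

lemma sum_norm_comp_single_rpow_le (hp : 1 < p.toReal) (f : lp E p →L[ℝ] ℝ) (s : Finset ι) :
    ∑ i ∈ s, ‖f ∘L lp.singleContinuousLinearMap ℝ E p i‖ ^ p.toReal.conjExponent ≤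
      ‖f‖ ^ p.toReal.conjExponent := by
  have hpq := Real.HolderConjugate.conjExponent hp
  set q := p.toReal.conjExponent
  set t := ∑ i ∈ s, ‖f ∘L lp.singleContinuousLinearMap ℝ E p i‖ ^ q
  have ht0 : 0 ≤ t := by positivity
  rcases ht0.eq_or_lt with ht | ht
  · rw [← ht]; positivity
  have hmul (x : ℝ) (hx : 0 ≤ x) : x ^ (q - 1) * x = x ^ q := by
    rw [← Real.rpow_add_one' hx (by simp [hpq.symm.ne_zero]), sub_add_cancel]
  have hpow (x : ℝ) (hx : 0 ≤ x) : (x ^ (q - 1)) ^ p.toReal = x ^ q := by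
    rw [← Real.rpow_mul hx, hpq.symm.sub_one_mul_conj]
  -- test the components against the Hölder extremiser `c i = ‖f ∘ single i‖ ^ (q - 1)`
  have key : t ≤ ‖f‖ * t ^ p.toReal⁻¹ := by
    simpa only [hmul, hpow, norm_nonneg] using sum_mul_norm_comp_single_le hpq.pos f s
      (c := fun i => ‖f ∘L lp.singleContinuousLinearMap ℝ E p i‖ ^ (q - 1)) fun i => by positivity
  have htq : t ^ q⁻¹ ≤ ‖f‖ := by
    refine le_of_mul_le_mul_left ?_ (Real.rpow_pos_of_pos ht p.toReal⁻¹)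
    rwa [← Real.rpow_add ht, hpq.inv_add_inv_eq_one, Real.rpow_one, mul_comm]
  calc t = (t ^ q⁻¹) ^ q := (Real.rpow_inv_rpow ht.le hpq.symm.ne_zero).symm
    _ ≤ ‖f‖ ^ q := by gcongr; exact hpq.symm.nonneg

lemma norm_comp_single_eq_and_apply_eq (hp : 1 < p.toReal) {y : lp E p} (hy : ‖y‖ = 1)
    {f : lp E p →L[ℝ] ℝ} (hf : ‖f‖ ≤ 1) (hfy : f y = 1) (i : ι) :
    ‖f ∘L lp.singleContinuousLinearMap ℝ E p i‖ = ‖y i‖ ^ (p.toReal - 1) ∧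
      (f ∘L lp.singleContinuousLinearMap ℝ E p i) (y i) =
        ‖y i‖ ^ (p.toReal - 1) * ‖y i‖ := by
  have hp_top : p ≠ ⊤ := by rintro rfl; norm_num at hp
  have hpq := Real.HolderConjugate.conjExponent hp
  set P := p.toReal
  set q := P.conjExponent
  set a := fun i => ‖y i‖
  set b := fun i => ‖f ∘L lp.singleContinuousLinearMap ℝ E p i‖
  have ha : HasSum (fun i => a i ^ P) 1 := by
    simpa [hy] using lp.hasSum_norm hpq.pos y
  have hb_le (s : Finset ι) : ∑ i ∈ s, b i ^ q ≤ 1 :=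
    (sum_norm_comp_single_rpow_le hp f s).trans
      (Real.rpow_le_one (norm_nonneg _) hf hpq.symm.nonneg)
  have hb : Summable fun i => b i ^ q := summable_of_sum_le (fun i => by positivity) hb_le
  have hfy_sum : HasSum (fun i => (f ∘L lp.singleContinuousLinearMap ℝ E p i) (y i)) 1 := by
    simpa [hfy] using (lp.hasSum_single hp_top y).mapL f
  have hyoung_sum : HasSum (fun i => a i ^ P / P + b i ^ q / q) (1 / P + (∑' i, b i ^ q) / q) :=
    (ha.div_const P).add (hb.hasSum.div_const q)
  have hyoung_sum_le : 1 / P + (∑' i, b i ^ q) / q ≤ 1 := by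
    calc 1 / P + (∑' i, b i ^ q) / q ≤ 1 / P + 1 / q := by
          gcongr
          · exact hpq.symm.nonneg
          · exact hb.tsum_le_of_sum_le hb_le
      _ = 1 := by rw [one_div, one_div, hpq.inv_add_inv_eq_one]
  have hle_mul (i : ι) : (f ∘L lp.singleContinuousLinearMap ℝ E p i) (y i) ≤ b i * a i :=
    (Real.le_norm_self _).trans ((f ∘L lp.singleContinuousLinearMap ℝ E p i).le_opNorm _)
  have hyoung (i : ι) : b i * a i ≤ a i ^ P / P + b i ^ q / q := by
    rw [mul_comm]; exact Real.young_inequality_of_nonneg (norm_nonneg _) (norm_nonneg _) hpq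
  -- `1 = ∑ f_i (y i) ≤ ∑ (a_i ^ p / p + b_i ^ q / q) ≤ 1` forces equality in every term
  have heq (i : ι) :
      (f ∘L lp.singleContinuousLinearMap ℝ E p i) (y i) = a i ^ P / P + b i ^ q / q := by
    by_contra hne
    exact (hasSum_lt (fun j => (hle_mul j).trans (hyoung j))
      (((hle_mul i).trans (hyoung i)).lt_of_ne hne) hfy_sum hyoung_sum).not_ge hyoung_sum_le
  have hmul_eq : b i * a i = a i ^ P / P + b i ^ q / q :=
    le_antisymm (hyoung i) (heq i ▸ hle_mul i)
  have hpow_eq : a i ^ P = b i ^ q :=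
    (Real.young_inequality_eq_iff_of_nonneg (norm_nonneg _) (norm_nonneg _) hpq).1
      (by rw [mul_comm, hmul_eq])
  have hb_eq : b i = a i ^ (P - 1) := by
    rw [← hpq.div_conj_eq_sub_one, div_eq_mul_inv, Real.rpow_mul (norm_nonneg _), hpow_eq,
      Real.rpow_rpow_inv (norm_nonneg _) hpq.symm.ne_zero]
  exact ⟨hb_eq, by rw [heq i, ← hmul_eq, hb_eq]⟩

lemma norm_le_of_norm_comp_single_le (hp : 1 < p.toReal) {y : lp E p} (hy : ‖y‖ = 1)
    {h : lp E p →L[ℝ] ℝ} {C : ℝ} (hC : 0 ≤ C)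
    (hh : ∀ i, ‖h ∘L lp.singleContinuousLinearMap ℝ E p i‖ ≤ C * ‖y i‖ ^ (p.toReal - 1)) :
    ‖h‖ ≤ C := by
  have hp_top : p ≠ ⊤ := by rintro rfl; norm_num at hp
  have hpq := Real.HolderConjugate.conjExponent hp
  refine h.opNorm_le_bound hC fun z => ?_
  have hy_sum : HasSum (fun i => (‖y i‖ ^ (p.toReal - 1)) ^ p.toReal.conjExponent)
      (1 ^ p.toReal.conjExponent) := by
    simpa [← Real.rpow_mul, hpq.sub_one_mul_conj, hy] using lp.hasSum_norm hpq.pos y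
  obtain ⟨S, -, hS, hS_sum⟩ := Real.inner_le_Lp_mul_Lq_hasSum_of_nonneg hpq (norm_nonneg z)
    zero_le_one (fun i => norm_nonneg _) (fun i => by positivity) (lp.hasSum_norm hpq.pos z) hy_sum
  have hhz : HasSum (fun i => (h ∘L lp.singleContinuousLinearMap ℝ E p i) (z i)) (h z) := by
    simpa using (lp.hasSum_single hp_top z).mapL h
  calc ‖h z‖ ≤ C * S := hhz.norm_le_of_bounded (hS_sum.mul_left C) fun i => by
        calc _ ≤ ‖h ∘L lp.singleContinuousLinearMap ℝ E p i‖ * ‖z i‖ :=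
              ContinuousLinearMap.le_opNorm _ _
          _ ≤ C * ‖y i‖ ^ (p.toReal - 1) * ‖z i‖ := by gcongr; exact hh i
          _ = C * (‖z i‖ * ‖y i‖ ^ (p.toReal - 1)) := by ring
    _ ≤ C * ‖z‖ := by gcongr; simpa using hS

lemma norm_sub_comp_single_le (hp : 1 < p.toReal) {y : lp E p} (hy : ‖y‖ = 1)
    {f g : lp E p →L[ℝ] ℝ} (hf : f ∈ supportFunctionals y) (hg : g ∈ supportFunctionals y)
    (i : ι) :
    ‖(f - g) ∘L lp.singleContinuousLinearMap ℝ E p i‖ ≤ scrD (E i) * ‖y i‖ ^ (p.toReal - 1) := by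
  obtain ⟨hf_norm, hf_apply⟩ :=
    norm_comp_single_eq_and_apply_eq hp hy hf.1.le (by rw [hf.2, hy]) i
  obtain ⟨hg_norm, hg_apply⟩ :=
    norm_comp_single_eq_and_apply_eq hp hy hg.1.le (by rw [hg.2, hy]) i
  rw [ContinuousLinearMap.sub_comp]
  rcases eq_or_ne (y i) 0 with hyi | hyi
  · have hzero : ‖y i‖ ^ (p.toReal - 1) = 0 := by
      rw [norm_eq_zero.2 hyi, Real.zero_rpow (by linarith)]
    rw [norm_eq_zero.1 (hf_norm.trans hzero), norm_eq_zero.1 (hg_norm.trans hzero), hzero]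
    simp
  set β := ‖y i‖ ^ (p.toReal - 1)
  set F := f ∘L lp.singleContinuousLinearMap ℝ E p i
  set G := g ∘L lp.singleContinuousLinearMap ℝ E p i
  have hβ : 0 < β := Real.rpow_pos_of_pos (norm_pos_iff.2 hyi) _
  have hF := inv_smul_mem_supportFunctionals hβ hf_norm hf_apply
  have hG := inv_smul_mem_supportFunctionals hβ hg_norm hg_apply
  calc ‖F - G‖ = β * dist (β⁻¹ • F) (β⁻¹ • G) := by
        rw [dist_eq_norm, ← smul_sub β⁻¹ F G, norm_smul, norm_inv, Real.norm_of_nonneg hβ.le,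
          mul_inv_cancel_left₀ hβ.ne']
    _ ≤ β * scrD (E i) := by
        gcongr
        exact (Metric.dist_le_diam_of_mem (isBounded_supportFunctionals _) hF hG).trans
          (diam_supportFunctionals_le_scrD hyi)
    _ = scrD (E i) * β := mul_comm _ _

lemma diam_supportFunctionals_le_iSup_scrD (hp : 1 < p.toReal) {y : lp E p} (hy : y ≠ 0) :
    Metric.diam (supportFunctionals y) ≤ ⨆ i, scrD (E i) := by
  have hD : 0 ≤ ⨆ i, scrD (E i) := Real.iSup_nonneg fun _ => scrD_nonneg
  have hbdd : BddAbove (Set.range fun i => scrD (E i)) :=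
    ⟨2, by rintro _ ⟨i, rfl⟩; exact scrD_le_two⟩
  rw [← supportFunctionals_smul (inv_pos.2 (norm_pos_iff.2 hy)) y]
  refine Metric.diam_le_of_forall_dist_le hD fun f hf g hg => ?_
  rw [dist_eq_norm]
  refine norm_le_of_norm_comp_single_le hp (norm_smul_inv_norm (𝕜 := ℝ) hy) hD fun i => ?_
  exact (norm_sub_comp_single_le hp (norm_smul_inv_norm (𝕜 := ℝ) hy) hf hg i).trans
    (mul_le_mul_of_nonneg_right (le_ciSup hbdd i) (by positivity))

end lp

theorem stmt9_general (E : ℕ → Type*) [∀ n, NormedAddCommGroup (E n)]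
    [∀ n, NormedSpace ℝ (E n)]
    (p : ℝ) (hp : 1 < p) [Fact (1 ≤ ENNReal.ofReal p)] :
    scrD (lp E (ENNReal.ofReal p)) = ⨆ n, scrD (E n) := by
  have hp' : 1 < (ENNReal.ofReal p).toReal := by rwa [ENNReal.toReal_ofReal (by linarith)]
  refine le_antisymm ?_ (ciSup_le lp.scrD_le_scrD)
  exact scrD_le_of_forall (Real.iSup_nonneg fun _ => scrD_nonneg) fun y hy =>
    lp.diam_supportFunctionals_le_iSup_scrD hp' hy

/-- For 1 < p < ∞ and a sequence of nontrivial normed spaces E_n,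
`𝒟(⊕_p E_n) = sup_n 𝒟(E_n)`. -/
theorem stmt9 (E : ℕ → Type*) [∀ n, NormedAddCommGroup (E n)]
    [∀ n, NormedSpace ℝ (E n)] [∀ n, Nontrivial (E n)]
    (p : ℝ) (hp : 1 < p) [Fact (1 ≤ ENNReal.ofReal p)] :
    scrD (lp E (ENNReal.ofReal p)) = ⨆ n, scrD (E n) :=
  stmt9_general E p hp
end

section
/- The c_0-direct sum ⊕_0 X_n of a sequence of nontrivial normed spaces has no nonzero right-symmetric point; moreover a nonzero x = (x_n) ∈ ⊕_0 X_n is left-symmetric if and only if there exists n_0 such that x_n = 0 for all n ≠ n_0 and x_{n_0} is a left-symmetric point of X_{n_0}. -/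
open scoped ENNReal
open Filter

/-- The c₀-direct sum of a sequence of normed spaces: the subspace of the ℓ_∞-direct sum
consisting of those sequences whose coordinate norms tend to zero, with the sup norm. -/
noncomputable def c0Sum (E : ℕ → Type*) [∀ n, NormedAddCommGroup (E n)]
    [∀ n, NormedSpace ℝ (E n)] : Submodule ℝ (lp E ∞) where
  carrier := {f | Tendsto (fun n => ‖f n‖) atTop (nhds 0)}
  add_mem' := by
    intro f g hf hg
    refine squeeze_zero (fun n => norm_nonneg _) (fun n => ?_) (by simpa using hf.add hg)
    simpa using norm_add_le (f n) (g n)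
  zero_mem' := by
    show Tendsto (fun n => ‖(0 : lp E ∞) n‖) atTop (nhds 0)
    simp only [lp.coeFn_zero, Pi.zero_apply, norm_zero]
    exact tendsto_const_nhds
  smul_mem' := by
    intro c f hf
    refine squeeze_zero (fun n => norm_nonneg _) (fun n => ?_) (by simpa using hf.const_mul ‖c‖)
    simp [norm_smul]

/-- Birkhoff-James orthogonality: `u ⊥_B v` iff `‖u + c • v‖ ≥ ‖u‖` for every scalar. -/
def BJOrth {X : Type*} [NormedAddCommGroup X] [NormedSpace ℝ X] (u v : X) : Prop :=
  ∀ c : ℝ, ‖u‖ ≤ ‖u + c • v‖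

/-- A left-symmetric point: `x ⊥_B y` implies `y ⊥_B x` for all `y`. -/
def LeftSymPt {X : Type*} [NormedAddCommGroup X] [NormedSpace ℝ X] (x : X) : Prop :=
  ∀ y : X, BJOrth x y → BJOrth y x

/-- A right-symmetric point: `y ⊥_B x` implies `x ⊥_B y` for all `y`. -/
def RightSymPt {X : Type*} [NormedAddCommGroup X] [NormedSpace ℝ X] (x : X) : Prop :=
  ∀ y : X, BJOrth y x → BJOrth x y


/-!
Birkhoff–James orthogonality `u ⊥ v` says that `c ↦ ‖u + c • v‖` is minimal at `0`; this
function is convex, so the condition is local in `c`. For `x` supported on a single coordinate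
`k`, the other coordinates of `x + c • y` are too small to matter for small `c`, whence
`x ⊥ y ↔ x k ⊥ y k`; this transfers left-symmetry between `x` and `x k`. Since its coordinates
tend to zero, an element `x` of the c₀-sum attains its norm at some `k`; then `x ⊥ e_m (x m)` for
`m ≠ k`, so left-symmetry gives `e_m (x m) ⊥ x`, i.e. `x m ⊥ x m`, forcing `x m = 0`.

For right-symmetry, choose `i ≠ j` with `‖x i‖, ‖x j‖ < ‖x‖ / 2` and replace these coordinates of
`x` by vectors of norm `‖x‖` pointing along `x i` and `-x j`. The resulting `y` has `‖y‖ = ‖x‖`,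
and for either sign of `c` one of the two coordinates keeps `‖y + c • x‖ ≥ ‖x‖`, so `y ⊥ x`;
but `‖x - y / 2‖ < ‖x‖`.
-/

section BJOrth

variable {X : Type*} [NormedAddCommGroup X] [NormedSpace ℝ X]

theorem BJOrth.of_isLocalMin {u v : X} (h : IsLocalMin (fun c : ℝ => ‖u + c • v‖) 0) :
    BJOrth u v := by
  have hline : (fun c : ℝ => ‖u + c • v‖) = norm ∘ AffineMap.lineMap u (u + v) := by
    ext c
    simp [AffineMap.lineMap_apply, add_comm]
  rw [hline] at h
  intro c
  simpa [AffineMap.lineMap_apply, add_comm] using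
    IsMinOn.of_isLocalMin_of_convex_univ h (convexOn_univ_norm.comp_affineMap _) c

theorem BJOrth.eq_zero_of_self {u : X} (h : BJOrth u u) : u = 0 := by
  simpa using h (-1)

theorem exists_norm_eq_forall_le_norm_add_smul [Nontrivial X] (u : X) {r : ℝ} (hr : 0 ≤ r) :
    ∃ a : X, ‖a‖ = r ∧ ∀ c : ℝ, 0 ≤ c → r ≤ ‖a + c • u‖ := by
  rcases eq_or_ne u 0 with rfl | hu
  · obtain ⟨a, ha⟩ := exists_norm_eq X hr
    exact ⟨a, ha, fun c _ => by simp [ha]⟩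
  · have hu' : 0 < ‖u‖ := norm_pos_iff.2 hu
    refine ⟨(r / ‖u‖) • u, ?_, fun c hc => ?_⟩
    · rw [norm_smul, Real.norm_of_nonneg (by positivity), div_mul_cancel₀ _ hu'.ne']
    · rw [← add_smul, norm_smul, Real.norm_of_nonneg (by positivity), add_mul,
        div_mul_cancel₀ _ hu'.ne']
      nlinarith

end BJOrth

theorem exists_forall_ge_of_tendsto_zero {f : ℕ → ℝ} (h0 : ∀ n, 0 ≤ f n)
    (hf : Tendsto f atTop (nhds 0)) : ∃ k, ∀ n, f n ≤ f k := by
  by_cases hz : ∀ n, f n = 0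
  · exact ⟨0, fun n => by simp [hz]⟩
  push Not at hz
  obtain ⟨m, hm⟩ := hz
  obtain ⟨N, hN⟩ := eventually_atTop.1 (hf.eventually_lt_const ((h0 m).lt_of_ne' hm))
  obtain ⟨k, -, hk⟩ := (Finset.range (max N (m + 1))).exists_max_image f ⟨m, by simp⟩
  refine ⟨k, fun n => ?_⟩
  by_cases hn : n < max N (m + 1)
  · exact hk n (Finset.mem_range.2 hn)
  · exact (hN n (by omega)).le.trans (hk m (by simp))

namespace lp

variable {ι : Type*} {E : ι → Type*} [∀ i, NormedAddCommGroup (E i)]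

section single

variable [DecidableEq ι]

theorem eq_single_of_forall_ne {p : ℝ≥0∞} {x : lp E p} {k : ι}
    (h : ∀ n, n ≠ k → x n = 0) : x = lp.single p k (x k) := by
  ext n
  rcases eq_or_ne n k with rfl | hn
  · simp
  · rw [h n hn, lp.single_apply_ne _ _ _ hn]

noncomputable def update (x : lp E ∞) (i : ι) (a : E i) : lp E ∞ :=
  x + lp.single ∞ i (a - x i)

theorem update_apply_self (x : lp E ∞) (i : ι) (a : E i) : update x i a i = a := by
  change x i + lp.single ∞ i (a - x i) i = a
  rw [lp.single_apply_self, add_sub_cancel]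

theorem update_apply_ne (x : lp E ∞) (i : ι) (a : E i) {n : ι} (hn : n ≠ i) :
    update x i a n = x n := by
  change x n + lp.single ∞ i (a - x i) n = x n
  rw [lp.single_apply_ne _ _ _ hn, add_zero]

theorem norm_update_le {x : lp E ∞} {i : ι} {a : E i} {r : ℝ} (hx : ‖x‖ ≤ r) (ha : ‖a‖ ≤ r) :
    ‖update x i a‖ ≤ r :=
  norm_le_of_forall_le ((norm_nonneg _).trans hx) fun n => by
    rcases eq_or_ne n i with rfl | hn
    · rwa [update_apply_self]
    · rw [update_apply_ne _ _ _ hn]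
      exact (norm_apply_le_norm ENNReal.top_ne_zero x n).trans hx

end single

variable [∀ i, NormedSpace ℝ (E i)]

theorem add_smul_apply (x y : lp E ∞) (c : ℝ) (n : ι) : (x + c • y) n = x n + c • y n := rfl

theorem bjOrth_of_apply {x y : lp E ∞} {k : ι} (hk : ‖x k‖ = ‖x‖) (h : BJOrth (x k) (y k)) :
    BJOrth x y := fun c =>
  calc ‖x‖ = ‖x k‖ := hk.symm
    _ ≤ ‖x k + c • y k‖ := h c
    _ = ‖(x + c • y) k‖ := by rw [add_smul_apply]
    _ ≤ ‖x + c • y‖ := norm_apply_le_norm ENNReal.top_ne_zero _ k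

variable [DecidableEq ι]

theorem bjOrth_single_left_iff (k : ι) (u : E k) (y : lp E ∞) :
    BJOrth (lp.single ∞ k u) y ↔ BJOrth u (y k) := by
  refine ⟨fun h => ?_, fun h => bjOrth_of_apply (k := k)
    (by rw [lp.single_apply_self, lp.norm_single ENNReal.zero_lt_top])
    (by rwa [lp.single_apply_self])⟩
  rcases eq_or_ne u 0 with rfl | hu
  · exact fun c => by simp
  refine BJOrth.of_isLocalMin ?_
  have hsmall : ∀ᶠ c in nhds (0 : ℝ), ‖c • y‖ < ‖u‖ := by
    have hcont : Continuous fun c : ℝ => ‖c • y‖ := by fun_prop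
    have h0 : Tendsto (fun c : ℝ => ‖c • y‖) (nhds 0) (nhds 0) := by
      simpa using hcont.tendsto 0
    exact h0.eventually_lt_const (norm_pos_iff.2 hu)
  filter_upwards [hsmall] with c hc
  have hmax : ‖u‖ ≤ max ‖u + c • y k‖ ‖c • y‖ := by
    refine (lp.norm_single ENNReal.zero_lt_top k u ▸ h c).trans
      (norm_le_of_forall_le (le_max_of_le_left (norm_nonneg _)) fun n => ?_)
    rw [add_smul_apply]
    rcases eq_or_ne n k with rfl | hn
    · rw [lp.single_apply_self]
      exact le_max_left _ _
    · rw [lp.single_apply_ne _ _ _ hn, zero_add]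
      exact le_max_of_le_right (norm_apply_le_norm ENNReal.top_ne_zero (c • y) n)
  simpa [hc.not_ge] using hmax

theorem bjOrth_single_right_of_apply {y : lp E ∞} {k : ι} {u : E k} (h : BJOrth (y k) u) :
    BJOrth y (lp.single ∞ k u) := fun c =>
  norm_le_of_forall_le (norm_nonneg _) fun n => by
    rcases eq_or_ne n k with rfl | hn
    · calc ‖y n‖ ≤ ‖y n + c • u‖ := h c
        _ = ‖(y + c • lp.single ∞ n u) n‖ := by rw [add_smul_apply, lp.single_apply_self]
        _ ≤ _ := norm_apply_le_norm ENNReal.top_ne_zero _ n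
    · calc ‖y n‖ = ‖(y + c • lp.single ∞ k u) n‖ := by
            rw [add_smul_apply, lp.single_apply_ne _ _ _ hn, smul_zero, add_zero]
        _ ≤ _ := norm_apply_le_norm ENNReal.top_ne_zero _ n

section update_update

variable {x : lp E ∞} {i j : ι} {a : E i} {b : E j}

theorem bjOrth_update_update (hij : i ≠ j) (ha : ‖a‖ ≤ ‖x‖) (hb : ‖b‖ ≤ ‖x‖)
    (hai : ∀ c : ℝ, 0 ≤ c → ‖x‖ ≤ ‖a + c • x i‖) (hbj : ∀ c : ℝ, 0 ≤ c → ‖x‖ ≤ ‖b + c • -x j‖) :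
    BJOrth (update (update x i a) j b) x := by
  intro c
  refine (norm_update_le (norm_update_le le_rfl ha) hb).trans ?_
  rcases le_total 0 c with hc | hc
  · calc ‖x‖ ≤ ‖a + c • x i‖ := hai c hc
        _ = ‖(update (update x i a) j b + c • x) i‖ := by
          rw [add_smul_apply, update_apply_ne _ _ _ hij, update_apply_self]
        _ ≤ _ := norm_apply_le_norm ENNReal.top_ne_zero _ i
  · calc ‖x‖ ≤ ‖b + (-c) • -x j‖ := hbj (-c) (neg_nonneg.2 hc)
        _ = ‖(update (update x i a) j b + c • x) j‖ := by
          rw [add_smul_apply, update_apply_self, neg_smul_neg]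
        _ ≤ _ := norm_apply_le_norm ENNReal.top_ne_zero _ j

theorem not_bjOrth_update_update (hij : i ≠ j) (ha : ‖a‖ ≤ ‖x‖) (hb : ‖b‖ ≤ ‖x‖)
    (hi : ‖x i‖ < ‖x‖ / 2) (hj : ‖x j‖ < ‖x‖ / 2) : ¬ BJOrth x (update (update x i a) j b) := by
  intro h
  have hshrink : ‖x + (-(1 / 2) : ℝ) • update (update x i a) j b‖ ≤ max ‖x i‖ ‖x j‖ + ‖x‖ / 2 := by
    refine norm_le_of_forall_le (by positivity) fun n => ?_
    have hbump : ∀ v : E n, ‖v‖ ≤ ‖x‖ → ‖x n + (-(1 / 2) : ℝ) • v‖ ≤ ‖x n‖ + ‖x‖ / 2 :=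
      fun v hv => (norm_add_le _ _).trans (by rw [norm_smul]; norm_num; linarith)
    rw [add_smul_apply]
    rcases eq_or_ne n j with rfl | hnj
    · rw [update_apply_self]
      exact (hbump b hb).trans (by gcongr; exact le_max_right _ _)
    rw [update_apply_ne _ _ _ hnj]
    rcases eq_or_ne n i with rfl | hni
    · rw [update_apply_self]
      exact (hbump a ha).trans (by gcongr; exact le_max_left _ _)
    have hhalf : x n + (-(1 / 2) : ℝ) • x n = (1 / 2 : ℝ) • x n := by module
    rw [update_apply_ne _ _ _ hni, hhalf, norm_smul]
    have := norm_apply_le_norm ENNReal.top_ne_zero x n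
    norm_num
    linarith [le_max_left ‖x i‖ ‖x j‖, norm_nonneg (x i)]
  linarith [h (-(1 / 2)), max_lt hi hj]

end update_update

end lp

namespace c0Sum

variable {E : ℕ → Type*} [∀ n, NormedAddCommGroup (E n)] [∀ n, NormedSpace ℝ (E n)]

theorem single_mem (k : ℕ) (u : E k) : lp.single ∞ k u ∈ c0Sum E :=
  tendsto_nhds_of_eventually_eq <| eventually_atTop.2
    ⟨k + 1, fun n hn => by rw [lp.single_apply_ne _ _ _ (by omega), norm_zero]⟩

theorem exists_norm_apply_eq (x : c0Sum E) : ∃ k, ‖(x : lp E ∞) k‖ = ‖x‖ := by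
  obtain ⟨k, hk⟩ := exists_forall_ge_of_tendsto_zero (fun n => norm_nonneg _) x.2
  exact ⟨k, le_antisymm (lp.norm_apply_le_norm ENNReal.top_ne_zero _ k)
    (lp.norm_le_of_forall_le (norm_nonneg _) hk)⟩

theorem exists_ne_norm_apply_lt_half (x : c0Sum E) (hx : x ≠ 0) :
    ∃ i j, i ≠ j ∧ ‖(x : lp E ∞) i‖ < ‖x‖ / 2 ∧ ‖(x : lp E ∞) j‖ < ‖x‖ / 2 := by
  have hx2 : 0 < ‖x‖ / 2 := half_pos (norm_pos_iff.2 hx)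
  obtain ⟨N, hN⟩ := eventually_atTop.1 (Tendsto.eventually_lt_const hx2 x.2)
  exact ⟨N, N + 1, by omega, hN N le_rfl, hN (N + 1) (by omega)⟩

theorem update_mem {x : lp E ∞} (hx : x ∈ c0Sum E) (i : ℕ) (a : E i) :
    lp.update x i a ∈ c0Sum E :=
  add_mem hx (single_mem i _)

theorem not_rightSymPt_of_norm_apply_lt_half (x : c0Sum E) {i j : ℕ} [Nontrivial (E i)]
    [Nontrivial (E j)] (hij : i ≠ j) (hi : ‖(x : lp E ∞) i‖ < ‖x‖ / 2)
    (hj : ‖(x : lp E ∞) j‖ < ‖x‖ / 2) : ¬ RightSymPt x := by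
  obtain ⟨a, ha, hai⟩ := exists_norm_eq_forall_le_norm_add_smul ((x : lp E ∞) i) (norm_nonneg x)
  obtain ⟨b, hb, hbj⟩ := exists_norm_eq_forall_le_norm_add_smul (-(x : lp E ∞) j) (norm_nonneg x)
  let y : c0Sum E := ⟨_, update_mem (update_mem x.2 i a) j b⟩
  intro hsym
  exact lp.not_bjOrth_update_update hij ha.le hb.le hi hj
    (hsym y (lp.bjOrth_update_update hij ha.le hb.le hai hbj))

theorem leftSymPt_iff_of_coe_eq_single {x : c0Sum E} {k : ℕ} {u : E k}
    (hx : (x : lp E ∞) = lp.single ∞ k u) : LeftSymPt x ↔ LeftSymPt u := by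
  constructor
  · intro hsym v huv
    let y : c0Sum E := ⟨_, single_mem k v⟩
    have hxy : BJOrth (x : lp E ∞) y := by
      rw [hx, lp.bjOrth_single_left_iff]
      simpa [y] using huv
    have hyx : BJOrth (y : lp E ∞) x := hsym y hxy
    rw [hx, lp.bjOrth_single_left_iff] at hyx
    simpa using hyx
  · intro hsym y hxy
    have hxy' : BJOrth (x : lp E ∞) y := hxy
    rw [hx, lp.bjOrth_single_left_iff] at hxy'
    have hyx : BJOrth (y : lp E ∞) (lp.single ∞ k u) :=
      lp.bjOrth_single_right_of_apply (hsym _ hxy')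
    rw [← hx] at hyx
    exact hyx

theorem apply_eq_zero_of_leftSymPt {x : c0Sum E} (hx : LeftSymPt x) {k : ℕ}
    (hk : ‖(x : lp E ∞) k‖ = ‖x‖) (n : ℕ) (hn : n ≠ k) : (x : lp E ∞) n = 0 := by
  let y : c0Sum E := ⟨_, single_mem n ((x : lp E ∞) n)⟩
  have hxy : BJOrth (x : lp E ∞) y := lp.bjOrth_of_apply hk <| by
    change BJOrth _ (lp.single ∞ n _ k)
    rw [lp.single_apply_ne _ _ _ hn.symm]
    exact fun c => by simp
  have hyx : BJOrth (y : lp E ∞) x := hx y hxy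
  exact ((lp.bjOrth_single_left_iff _ _ _).1 hyx).eq_zero_of_self

end c0Sum

/-- The c₀-direct sum of nontrivial normed spaces has no nonzero right-symmetric point,
and a nonzero `x = (x_n)` is left-symmetric iff `x` is supported on a single coordinate
`n₀` with `x_{n₀}` a left-symmetric point of `E_{n₀}`. -/
theorem stmt19 (E : ℕ → Type*) [∀ n, NormedAddCommGroup (E n)]
    [∀ n, NormedSpace ℝ (E n)] [∀ n, Nontrivial (E n)] :
    (∀ x : c0Sum E, x ≠ 0 → ¬ RightSymPt x) ∧
    (∀ x : c0Sum E, x ≠ 0 → (LeftSymPt x ↔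
      ∃ n₀, (∀ n, n ≠ n₀ → (x : lp E ∞) n = 0) ∧ LeftSymPt ((x : lp E ∞) n₀))) := by
  refine ⟨fun x hx => ?_, fun x _ => ⟨fun hsym => ?_, ?_⟩⟩
  · obtain ⟨i, j, hij, hi, hj⟩ := c0Sum.exists_ne_norm_apply_lt_half x hx
    exact c0Sum.not_rightSymPt_of_norm_apply_lt_half x hij hi hj
  · obtain ⟨k, hk⟩ := c0Sum.exists_norm_apply_eq x
    have hsupp := c0Sum.apply_eq_zero_of_leftSymPt hsym hk
    exact ⟨k, hsupp,
      (c0Sum.leftSymPt_iff_of_coe_eq_single (lp.eq_single_of_forall_ne hsupp)).1 hsym⟩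
  · rintro ⟨k, hsupp, hk⟩
    exact (c0Sum.leftSymPt_iff_of_coe_eq_single (lp.eq_single_of_forall_ne hsupp)).2 hk
end
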